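/- arXiv:2602.13906 — 2 statements merged into one kernel-verified Lean document; each statement's English description precedes it below -/
import Mathlib

section
/- Let J ∈ ℝ^{d×d} be a Hurwitz matrix (all eigenvalues have strictly negative real part) and let V be the unique symmetric positive definite solution of the Lyapunov equation JᵀV + VJ + I = 0. Set ι = 1/(4‖V‖). Then for all ε₁ ∈ [0, min(1, 2ι/‖J‖²_V)] and ε₂ ∈ [0, min(1, ι/3)], the V-weighted operator norm satisfies ‖I + ε₁ J + ε₁ε₂ I‖²_V ≤ 1 − ι ε₁. -/
/-!
Write `c = 1 + ε₁ε₂`, so that the matrix is `c • 1 + ε₁ • J`. For `‖x‖_V = 1`, the Lyapunov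
equation turns the cross term `2 c ε₁ xᵀVJx` into `-c ε₁ ‖x‖²`, and `‖x‖² ≥ 1 / ‖V‖ = 4ι`. Hence
`‖(c • 1 + ε₁ • J) x‖_V² = c² - c ε₁ ‖x‖² + ε₁² ‖Jx‖_V² ≤ c² - 4ιε₁ + 2ιε₁`, using
`ε₁ ‖J‖_V² ≤ 2ι`, and `c² - 1 ≤ 3ε₁ε₂ ≤ ιε₁` because `ε₂ ≤ ι / 3`.
-/

set_option autoImplicit false
open Matrix

/-- The `V`-weighted norm `‖x‖_V = √(xᵀ V x)`. -/
noncomputable def wnorm {d : ℕ} (V : Matrix (Fin d) (Fin d) ℝ) (x : Fin d → ℝ) : ℝ :=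
  Real.sqrt (x ⬝ᵥ V.mulVec x)

/-- The `V`-weighted operator norm `‖A‖_V = sup_{‖x‖_V = 1} ‖Ax‖_V`. -/
noncomputable def wopNorm {d : ℕ} (V A : Matrix (Fin d) (Fin d) ℝ) : ℝ :=
  sSup {r | ∃ x : Fin d → ℝ, wnorm V x = 1 ∧ r = wnorm V (A.mulVec x)}

open scoped Matrix.Norms.L2Operator MatrixOrder

namespace Matrix

variable {m n : Type*} [Fintype m] [Fintype n]

lemma dotProduct_self_eq_norm_sq (x : n → ℝ) :
    x ⬝ᵥ x = ‖(EuclideanSpace.equiv n ℝ).symm x‖ ^ 2 := by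
  rw [← real_inner_self_eq_norm_sq]
  rfl

variable [DecidableEq n]

lemma mulVec_dotProduct_mulVec_le (A : Matrix m n ℝ) (x : n → ℝ) :
    (A *ᵥ x) ⬝ᵥ (A *ᵥ x) ≤ ‖A‖ ^ 2 * (x ⬝ᵥ x) := by
  rw [dotProduct_self_eq_norm_sq, dotProduct_self_eq_norm_sq, ← mul_pow]
  exact pow_le_pow_left₀ (norm_nonneg _) (A.l2_opNorm_mulVec _) 2

lemma dotProduct_mulVec_le (A : Matrix n n ℝ) (x : n → ℝ) :
    x ⬝ᵥ A *ᵥ x ≤ ‖A‖ * (x ⬝ᵥ x) := by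
  set e := (EuclideanSpace.equiv n ℝ).symm
  calc x ⬝ᵥ A *ᵥ x = inner ℝ (e x) (e (A *ᵥ x)) := by
        simp [e, EuclideanSpace.inner_toLp_toLp, dotProduct_comm]
    _ ≤ ‖e x‖ * ‖e (A *ᵥ x)‖ := real_inner_le_norm _ _
    _ ≤ ‖e x‖ * (‖A‖ * ‖e x‖) := by gcongr; exact A.l2_opNorm_mulVec _
    _ = ‖A‖ * (x ⬝ᵥ x) := by rw [dotProduct_self_eq_norm_sq]; ring

lemma PosDef.exists_pos_mul_dotProduct_le {A : Matrix n n ℝ} (hA : A.PosDef) :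
    ∃ r > 0, ∀ x : n → ℝ, r * (x ⬝ᵥ x) ≤ x ⬝ᵥ A *ᵥ x := by
  rcases isEmpty_or_nonempty n with hn | hn
  · exact ⟨1, one_pos, fun x => by simp [Subsingleton.elim x 0]⟩
  obtain ⟨r, hr, hrA⟩ := (CFC.exists_pos_algebraMap_le_iff hA.isHermitian.isSelfAdjoint).2
    fun _ hx => hA.isStrictlyPositive.spectrum_pos hx
  refine ⟨r, hr, fun x => ?_⟩
  simpa [sub_mulVec, Algebra.algebraMap_eq_smul_one, smul_mulVec] using
    (le_iff.1 hrA).dotProduct_mulVec_nonneg x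

lemma dotProduct_mulVec_cross_of_lyapunov {J V : Matrix n n ℝ}
    (hLyap : Jᵀ * V + V * J + 1 = 0) (x : n → ℝ) :
    x ⬝ᵥ V *ᵥ (J *ᵥ x) + (J *ᵥ x) ⬝ᵥ V *ᵥ x = -(x ⬝ᵥ x) := by
  have hform : x ⬝ᵥ (Jᵀ * V + V * J + 1) *ᵥ x = 0 := by rw [hLyap, zero_mulVec, dotProduct_zero]
  rw [add_mulVec, add_mulVec, ← mulVec_mulVec, ← mulVec_mulVec, one_mulVec, dotProduct_add,
    dotProduct_add, dotProduct_mulVec x Jᵀ, vecMul_transpose] at hform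
  linear_combination hform

lemma dotProduct_mulVec_smul_add_of_lyapunov {J V : Matrix n n ℝ} (hLyap : Jᵀ * V + V * J + 1 = 0)
    (c ε : ℝ) (x : n → ℝ) :
    (c • x + ε • J *ᵥ x) ⬝ᵥ V *ᵥ (c • x + ε • J *ᵥ x) =
      c ^ 2 * (x ⬝ᵥ V *ᵥ x) - c * ε * (x ⬝ᵥ x) + ε ^ 2 * ((J *ᵥ x) ⬝ᵥ V *ᵥ (J *ᵥ x)) := by
  simp only [mulVec_add, mulVec_smul, dotProduct_add, add_dotProduct, dotProduct_smul,
    smul_dotProduct, smul_eq_mul]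
  linear_combination c * ε * dotProduct_mulVec_cross_of_lyapunov hLyap x

end Matrix

section WeightedNorm

variable {d : ℕ} {V : Matrix (Fin d) (Fin d) ℝ}

lemma wnorm_nonneg (V : Matrix (Fin d) (Fin d) ℝ) (x : Fin d → ℝ) : 0 ≤ wnorm V x :=
  Real.sqrt_nonneg _

lemma wnorm_sq (hV : V.PosSemidef) (x : Fin d → ℝ) : wnorm V x ^ 2 = x ⬝ᵥ V *ᵥ x :=
  Real.sq_sqrt (by simpa using hV.dotProduct_mulVec_nonneg x)

lemma wnorm_eq_one_iff {x : Fin d → ℝ} : wnorm V x = 1 ↔ x ⬝ᵥ V *ᵥ x = 1 :=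
  Real.sqrt_eq_one

lemma wnorm_smul (V : Matrix (Fin d) (Fin d) ℝ) (c : ℝ) (x : Fin d → ℝ) :
    wnorm V (c • x) = |c| * wnorm V x := by
  rw [wnorm, wnorm, mulVec_smul, smul_dotProduct, dotProduct_smul, smul_eq_mul, smul_eq_mul,
    ← mul_assoc, ← sq, Real.sqrt_mul (sq_nonneg c), Real.sqrt_sq_eq_abs]

lemma exists_wnorm_eq_one [Nonempty (Fin d)] (hV : V.PosDef) : ∃ x, wnorm V x = 1 := by
  obtain ⟨x, hx⟩ := exists_ne (0 : Fin d → ℝ)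
  have hpos : 0 < wnorm V x := Real.sqrt_pos.2 (by simpa using hV.dotProduct_mulVec_pos hx)
  exact ⟨(wnorm V x)⁻¹ • x, by rw [wnorm_smul, abs_inv, abs_of_pos hpos, inv_mul_cancel₀ hpos.ne']⟩

lemma bddAbove_wnorm_mulVec (hV : V.PosDef) (A : Matrix (Fin d) (Fin d) ℝ) :
    BddAbove {r | ∃ x : Fin d → ℝ, wnorm V x = 1 ∧ r = wnorm V (A *ᵥ x)} := by
  obtain ⟨r, hr, hrV⟩ := hV.exists_pos_mul_dotProduct_le
  refine ⟨Real.sqrt (‖V‖ * (‖A‖ ^ 2 * (1 / r))), ?_⟩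
  rintro _ ⟨x, hx, rfl⟩
  have hxx : x ⬝ᵥ x ≤ 1 / r := by
    rw [le_div_iff₀' hr, ← wnorm_eq_one_iff.1 hx]
    exact hrV x
  refine Real.sqrt_le_sqrt ((dotProduct_mulVec_le V _).trans ?_)
  gcongr
  exact (mulVec_dotProduct_mulVec_le A x).trans (by gcongr)

lemma wnorm_mulVec_le_wopNorm (hV : V.PosDef) (A : Matrix (Fin d) (Fin d) ℝ) {x : Fin d → ℝ}
    (hx : wnorm V x = 1) : wnorm V (A *ᵥ x) ≤ wopNorm V A :=
  le_csSup (bddAbove_wnorm_mulVec hV A) ⟨x, hx, rfl⟩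

lemma wopNorm_sq_le_of_forall {A : Matrix (Fin d) (Fin d) ℝ} {b : ℝ} (hb : 0 ≤ b)
    (h : ∀ x, wnorm V x = 1 → wnorm V (A *ᵥ x) ^ 2 ≤ b) : wopNorm V A ^ 2 ≤ b := by
  have hle : wopNorm V A ≤ Real.sqrt b := Real.sSup_le
    (by rintro _ ⟨x, hx, rfl⟩; exact (Real.le_sqrt (wnorm_nonneg _ _) hb).2 (h x hx))
    (Real.sqrt_nonneg b)
  have hnonneg : 0 ≤ wopNorm V A := Real.sSup_nonneg fun _ ⟨_, _, hr⟩ => hr ▸ wnorm_nonneg _ _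
  exact (Real.le_sqrt hnonneg hb).1 hle

lemma wnorm_sq_mulVec_le_of_lyapunov {J : Matrix (Fin d) (Fin d) ℝ} (hV : V.PosDef)
    (hLyap : Jᵀ * V + V * J + 1 = 0) {ι ε₁ ε₂ : ℝ} (hι : ι = 1 / (4 * ‖V‖))
    (hε₁ : 0 ≤ ε₁) (hε₁1 : ε₁ ≤ 1) (hε₁J : ε₁ * wopNorm V J ^ 2 ≤ 2 * ι)
    (hε₂ : 0 ≤ ε₂) (hε₂1 : ε₂ ≤ 1) (hε₂ι : ε₂ ≤ ι / 3) {x : Fin d → ℝ} (hx : wnorm V x = 1) :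
    wnorm V ((1 + ε₁ • J + (ε₁ * ε₂) • 1) *ᵥ x) ^ 2 ≤ 1 - ι * ε₁ := by
  have hAx : (1 + ε₁ • J + (ε₁ * ε₂) • 1) *ᵥ x = (1 + ε₁ * ε₂) • x + ε₁ • J *ᵥ x := by
    simp only [add_mulVec, smul_mulVec, one_mulVec, add_smul, one_smul]
    abel
  have hq : x ⬝ᵥ V *ᵥ x = 1 := wnorm_eq_one_iff.1 hx
  have hxx : 4 * ι ≤ x ⬝ᵥ x := by
    have hV1 : 1 ≤ (x ⬝ᵥ x) * ‖V‖ := by rw [mul_comm, ← hq]; exact dotProduct_mulVec_le V x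
    calc 4 * ι = 1 / ‖V‖ := by rw [hι]; ring
      _ ≤ x ⬝ᵥ x := div_le_of_le_mul₀ (norm_nonneg V)
          (by simpa using dotProduct_star_self_nonneg x) hV1
  have hJx : ε₁ * ((J *ᵥ x) ⬝ᵥ V *ᵥ (J *ᵥ x)) ≤ 2 * ι := by
    rw [← wnorm_sq hV.posSemidef]
    refine le_trans ?_ hε₁J
    gcongr
    · exact wnorm_nonneg _ _
    · exact wnorm_mulVec_le_wopNorm hV J hx
  have hι0 : 0 ≤ ι := hι ▸ by positivity
  rw [wnorm_sq hV.posSemidef, hAx, dotProduct_mulVec_smul_add_of_lyapunov hLyap, hq]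
  have hε : 0 ≤ ε₁ * ε₂ := mul_nonneg hε₁ hε₂
  nlinarith [mul_le_mul_of_nonneg_left hJx hε₁, mul_le_one₀ hε₁1 hε₂ hε₂1,
    mul_le_mul_of_nonneg_left hε₂ι hε₁, mul_nonneg (mul_nonneg hι0 hε₁) hε,
    mul_le_mul_of_nonneg_left hxx (mul_nonneg (by positivity : (0 : ℝ) ≤ 1 + ε₁ * ε₂) hε₁)]

end WeightedNorm

theorem contraction_hurwitz_weighted_norm_general {d : ℕ} (J V : Matrix (Fin d) (Fin d) ℝ)
    (hV : V.PosDef)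
    (hLyap : Jᵀ * V + V * J + 1 = 0)
    (ι : ℝ) (hι : ι = 1 / (4 * ‖Matrix.toEuclideanCLM (𝕜 := ℝ) V‖))
    (ε₁ ε₂ : ℝ)
    (hε₁ : ε₁ ∈ Set.Icc 0 (min 1 (2 * ι / (wopNorm V J) ^ 2)))
    (hε₂ : ε₂ ∈ Set.Icc 0 (min 1 (ι / 3))) :
    (wopNorm V (1 + ε₁ • J + (ε₁ * ε₂) • (1 : Matrix (Fin d) (Fin d) ℝ))) ^ 2 ≤ 1 - ι * ε₁ := by
  obtain ⟨hε₁0, hε₁m⟩ := hε₁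
  obtain ⟨hε₂0, hε₂m⟩ := hε₂
  have hι0 : 0 ≤ ι := hι ▸ by positivity
  have hε₁J : ε₁ * wopNorm V J ^ 2 ≤ 2 * ι :=
    mul_le_of_le_div₀ (by linarith) (sq_nonneg _) (hε₁m.trans (min_le_right _ _))
  have hstep x (hx : wnorm V x = 1) :=
    wnorm_sq_mulVec_le_of_lyapunov hV hLyap hι hε₁0 (hε₁m.trans (min_le_left _ _)) hε₁J hε₂0
      (hε₂m.trans (min_le_left _ _)) (hε₂m.trans (min_le_right _ _)) hx
  refine wopNorm_sq_le_of_forall ?_ hstep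
  rcases isEmpty_or_nonempty (Fin d) with hd | hd
  · -- `V = 0` here, so `ι = 1 / 0 = 0`.
    simp [hι, Subsingleton.elim V 0]
  · obtain ⟨x, hx⟩ := exists_wnorm_eq_one hV
    exact (sq_nonneg _).trans (hstep x hx)

theorem contraction_hurwitz_weighted_norm {d : ℕ} (J V : Matrix (Fin d) (Fin d) ℝ)
    (hJ : ∀ μ ∈ spectrum ℂ (J.map (algebraMap ℝ ℂ)), μ.re < 0)
    (hV : V.PosDef) (hVsymm : Vᵀ = V)
    (hLyap : Jᵀ * V + V * J + 1 = 0)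
    (ι : ℝ) (hι : ι = 1 / (4 * ‖Matrix.toEuclideanCLM (𝕜 := ℝ) V‖))
    (ε₁ ε₂ : ℝ)
    (hε₁ : ε₁ ∈ Set.Icc 0 (min 1 (2 * ι / (wopNorm V J) ^ 2)))
    (hε₂ : ε₂ ∈ Set.Icc 0 (min 1 (ι / 3))) :
    (wopNorm V (1 + ε₁ • J + (ε₁ * ε₂) • (1 : Matrix (Fin d) (Fin d) ℝ))) ^ 2 ≤ 1 - ι * ε₁ :=
  contraction_hurwitz_weighted_norm_general J V hV hLyap ι hι ε₁ ε₂ hε₁ hε₂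
end

section
/- Let u_k be nonnegative reals satisfying u_{k+1} ≤ (1 − μ₁ α_k) u_k + μ₃ α_k^{1+ρ₂}, where α_k = α/(k+K), K ≥ 1, and μ₁α = ρ₂ > 0. Then u_k ≤ u₀ (K/(k+K))^{μ₁α} + 2^{1+ρ₂} α^{1+ρ₂} μ₃ log(k+K) / (k+K)^{ρ₂} for all k ≥ 1. -/
/-!
Write `ρ = μ₁ α` and `B = μ₃ α ^ (1 + ρ)`, and multiply by the integrating factor
`(k + K) ^ ρ`. Because `1 - x ≤ exp (-x)` and `1 + x ≤ exp x`, the contraction factor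
satisfies `(1 - ρ / s) * (s + 1) ^ ρ ≤ s ^ ρ`: in the critical case it exactly absorbs the
growth of the weight. The weighted sequence `v k = (k + K) ^ ρ * u k` therefore only
accumulates the forcing terms, each at most `2 ^ (1 + ρ) * B / (k + K + 1)`, and these are
dominated by the telescoping increments `log (k + K + 1) - log (k + K)`, which produces the
logarithm.
-/

open Real

lemma one_sub_div_mul_add_one_rpow_le {ρ t : ℝ} (hρ : 0 ≤ ρ) (ht : 0 < t) :
    (1 - ρ / t) * (t + 1) ^ ρ ≤ t ^ ρ := by
  have hexp : t + 1 ≤ t * exp t⁻¹ := by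
    have := add_one_le_exp t⁻¹
    calc t + 1 = t * (t⁻¹ + 1) := by field_simp; ring
      _ ≤ t * exp t⁻¹ := by gcongr
  calc (1 - ρ / t) * (t + 1) ^ ρ ≤ exp (-(ρ / t)) * (t * exp t⁻¹) ^ ρ :=
        mul_le_mul (by linarith [add_one_le_exp (-(ρ / t))]) (rpow_le_rpow (by positivity) hexp hρ)
          (by positivity) (exp_pos _).le
    _ = t ^ ρ := by
        rw [mul_rpow ht.le (exp_pos _).le, ← exp_mul, mul_left_comm, ← exp_add]
        field_simp
        simp

lemma add_one_rpow_div_rpow_le {p s : ℝ} (hp : 0 ≤ p) (hs : 1 ≤ s) :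
    (s + 1) ^ p / s ^ (1 + p) ≤ 2 ^ (1 + p) / (s + 1) := by
  have hs0 : 0 < s := by linarith
  calc (s + 1) ^ p / s ^ (1 + p) = ((s + 1) / s) ^ (1 + p) / (s + 1) := by
        rw [div_rpow (by positivity) hs0.le, rpow_add (by positivity : (0:ℝ) < s + 1), rpow_one]
        field_simp
    _ ≤ 2 ^ (1 + p) / (s + 1) := by
        gcongr
        rw [div_le_iff₀ hs0]
        linarith

lemma inv_add_one_le_log_add_one_sub_log {s : ℝ} (hs : 0 < s) :
    (s + 1)⁻¹ ≤ log (s + 1) - log s := by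
  have := one_sub_inv_le_log_of_pos (show 0 < (s + 1) / s by positivity)
  rw [log_div (by positivity) hs.ne', inv_div] at this
  calc (s + 1)⁻¹ = 1 - s / (s + 1) := by field_simp; ring
    _ ≤ _ := this

lemma add_one_rpow_mul_le_of_le_one_sub_div_mul {ρ s B L w : ℝ} (hρ : 0 ≤ ρ) (hs : 1 ≤ s)
    (hB : 0 ≤ B) (hL : 0 ≤ L) (hw : w ≤ (1 - ρ / s) * L + B / s ^ (1 + ρ)) :
    (s + 1) ^ ρ * w ≤ s ^ ρ * L + 2 ^ (1 + ρ) * B * (log (s + 1) - log s) := by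
  have hs0 : 0 < s := by linarith
  calc (s + 1) ^ ρ * w ≤ (s + 1) ^ ρ * ((1 - ρ / s) * L + B / s ^ (1 + ρ)) := by gcongr
    _ = (1 - ρ / s) * (s + 1) ^ ρ * L + B * ((s + 1) ^ ρ / s ^ (1 + ρ)) := by ring
    _ ≤ s ^ ρ * L + B * (2 ^ (1 + ρ) / (s + 1)) := by
        gcongr ?_ * L + B * ?_
        · exact one_sub_div_mul_add_one_rpow_le hρ hs0
        · exact add_one_rpow_div_rpow_le hρ hs
    _ = s ^ ρ * L + 2 ^ (1 + ρ) * B * (s + 1)⁻¹ := by ring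
    _ ≤ s ^ ρ * L + 2 ^ (1 + ρ) * B * (log (s + 1) - log s) := by
        gcongr
        exact inv_add_one_le_log_add_one_sub_log hs0

theorem le_div_rpow_of_critical_recursion {u : ℕ → ℝ} {ρ B K : ℝ} (hρ : 0 ≤ ρ) (hK : 1 ≤ K)
    (hB : 0 ≤ B) (hu : ∀ k, 0 ≤ u k)
    (hrec : ∀ k : ℕ, u (k + 1) ≤ (1 - ρ / (k + K)) * u k + B / (k + K) ^ (1 + ρ)) (k : ℕ) :
    u k ≤ (K ^ ρ * u 0 + 2 ^ (1 + ρ) * B * log (k + K)) / (k + K) ^ ρ := by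
  have hanti : Antitone fun k : ℕ ↦ ((k : ℝ) + K) ^ ρ * u k - 2 ^ (1 + ρ) * B * log (k + K) := by
    refine antitone_nat_of_succ_le fun k ↦ ?_
    have := add_one_rpow_mul_le_of_le_one_sub_div_mul hρ (by linarith [k.cast_nonneg' (α := ℝ)])
      hB (hu k) (hrec k)
    rw [Nat.cast_succ, add_right_comm]
    linarith
  have hlogK : 0 ≤ 2 ^ (1 + ρ) * B * log K := by positivity [log_nonneg hK]
  have := hanti k.zero_le
  simp only [Nat.cast_zero, zero_add] at this
  rw [le_div_iff₀ (by positivity)]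
  linarith

theorem recursion_one_over_k_critical_general (u : ℕ → ℝ) (μ₁ μ₃ ρ₂ α K : ℝ)
    (hu : ∀ k, 0 ≤ u k) (hμ₃ : 0 ≤ μ₃)
    (hα : 0 < α) (hK : 1 ≤ K) (hcrit : μ₁ * α = ρ₂) (hρ₂ : 0 < ρ₂)
    (hrec : ∀ k : ℕ, u (k + 1) ≤ (1 - μ₁ * (α / ((k : ℝ) + K))) * u k +
      μ₃ * (α / ((k : ℝ) + K)) ^ (1 + ρ₂)) :
    ∀ k : ℕ, 1 ≤ k → u k ≤ u 0 * (K / ((k : ℝ) + K)) ^ (μ₁ * α) +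
      2 ^ (1 + ρ₂) * α ^ (1 + ρ₂) * μ₃ * Real.log ((k : ℝ) + K) / ((k : ℝ) + K) ^ ρ₂ := by
  have hpos (k : ℕ) : 0 ≤ (k : ℝ) + K := by linarith [k.cast_nonneg' (α := ℝ)]
  have hrec' (k : ℕ) : u (k + 1) ≤ (1 - ρ₂ / (k + K)) * u k +
      μ₃ * α ^ (1 + ρ₂) / (k + K) ^ (1 + ρ₂) := by
    have := hrec k
    rwa [mul_div_assoc', hcrit, div_rpow hα.le (hpos k), mul_div_assoc'] at this
  intro k _
  have := le_div_rpow_of_critical_recursion hρ₂.le hK (by positivity) hu hrec' k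
  rw [hcrit, div_rpow (by linarith) (hpos k)]
  exact this.trans_eq (by ring)

theorem recursion_one_over_k_critical (u : ℕ → ℝ) (μ₁ μ₃ ρ₂ α K : ℝ)
    (hu : ∀ k, 0 ≤ u k) (hμ₁ : 0 ≤ μ₁) (hμ₃ : 0 ≤ μ₃)
    (hα : 0 < α) (hK : 1 ≤ K) (hcrit : μ₁ * α = ρ₂) (hρ₂ : 0 < ρ₂)
    (hrec : ∀ k : ℕ, u (k + 1) ≤ (1 - μ₁ * (α / ((k : ℝ) + K))) * u k +
      μ₃ * (α / ((k : ℝ) + K)) ^ (1 + ρ₂)) :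
    ∀ k : ℕ, 1 ≤ k → u k ≤ u 0 * (K / ((k : ℝ) + K)) ^ (μ₁ * α) +
      2 ^ (1 + ρ₂) * α ^ (1 + ρ₂) * μ₃ * Real.log ((k : ℝ) + K) / ((k : ℝ) + K) ^ ρ₂ :=
  recursion_one_over_k_critical_general u μ₁ μ₃ ρ₂ α K hu hμ₃ hα hK hcrit hρ₂ hrec
end
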